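/- arXiv:2109.02021 — 2 statements merged into one kernel-verified Lean document; each statement's English description precedes it below -/
import Mathlib

section
/- Suppose D is even. Let 𝐄_0, …, 𝐄_D ∈ Mat_{𝔽₂^D}(ℂ) satisfy Σ_{i=0}^D 𝐄_i = I and 𝐀·𝐄_i = (D−2i)·𝐄_i for all i, and let E_0, …, E_{D/2} ∈ Mat_X(ℂ) satisfy Σ_i E_i = I and A·E_i = θ_i·E_i for all i, where θ_i = ((D−2i)² − D)/2. Then for each 0 ≤ i ≤ D/2 − 1 the matrix E_i equals the submatrix of 𝐄_i + 𝐄_{D−i} obtained by restricting rows and columns to X, and E_{D/2} equals the submatrix of 𝐄_{D/2} restricted to X. -/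
open Matrix

/-- Vertex set of the hypercube `H(D,2)`: binary words of length `D`. -/
abbrev Vtx (D : ℕ) := Fin D → ZMod 2

/-- Vertex set of the halved cube: binary words of even Hamming weight. -/
abbrev HVtx (D : ℕ) := {x : Vtx D // Even (hammingNorm x)}

/-- Adjacency matrix of the hypercube `H(D,2)`. -/
noncomputable def adjCube (D : ℕ) : Matrix (Vtx D) (Vtx D) ℂ :=
  fun y z => if hammingNorm (y - z) = 1 then 1 else 0

/-- Adjacency matrix of the halved cube `½H(D,2)`. -/
noncomputable def adjHalf (D : ℕ) : Matrix (HVtx D) (HVtx D) ℂ :=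
  fun y z => if hammingNorm (y.val - z.val) = 2 then 1 else 0

/-!
The distance-2 graph of the hypercube splits into two copies of the halved cube (even and odd
words), so restricting to `X` intertwines it with `A`; and `𝐀² = 2·(distance-2 matrix) + D·I`,
so each `𝐄_j` is an eigenmatrix of the distance-2 matrix for `((D - 2j)² - D)/2`, a value
shared by `j` and `D - j` only. Hence the restricted matrices `𝐄_i + 𝐄_{D-i}` (and `𝐄_{D/2}`)
form a resolution of the identity into eigenmatrices of `A` with pairwise distinct eigenvalues.
Such a resolution is unique: evaluating the Lagrange basis polynomial of `θ_i` at `A` yields its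
`i`-th member.
-/

open Finset Polynomial

section Resolution

variable {K A ι : Type*} [Field K] [Ring A] [Algebra K A]

theorem aeval_mul_of_mul_eq_smul {m e : A} {μ : K} (h : m * e = μ • e) (p : K[X]) :
    aeval m p * e = p.eval μ • e := by
  induction p using Polynomial.induction_on' with
  | add p q hp hq => simp only [map_add, add_mul, hp, hq, eval_add, add_smul]
  | monomial n a =>
    have hpow : m ^ n * e = μ ^ n • e := by
      induction n with
      | zero => simp
      | succ n ih => rw [pow_succ', mul_assoc, ih, mul_smul_comm, h, smul_smul, pow_succ]
    rw [aeval_monomial, eval_monomial, mul_assoc, hpow, Algebra.algebraMap_eq_smul_one,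
      smul_mul_assoc, one_mul, smul_smul]

theorem aeval_eq_sum_smul_of_sum_eq_one {m : A} {s : Finset ι} {θ : ι → K} {e : ι → A}
    (he : ∑ i ∈ s, e i = 1) (hme : ∀ i ∈ s, m * e i = θ i • e i) (p : K[X]) :
    aeval m p = ∑ i ∈ s, p.eval (θ i) • e i := by
  rw [← mul_one (aeval m p), ← he, mul_sum]
  exact sum_congr rfl fun i hi => aeval_mul_of_mul_eq_smul (hme i hi) p

theorem aeval_lagrangeBasis_eq_of_sum_eq_one [DecidableEq ι] {m : A} {s : Finset ι} {θ : ι → K}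
    (hθ : Set.InjOn θ s) {e : ι → A}
    (he : ∑ i ∈ s, e i = 1) (hme : ∀ i ∈ s, m * e i = θ i • e i) {i : ι} (hi : i ∈ s) :
    aeval m (Lagrange.basis s θ i) = e i := by
  rw [aeval_eq_sum_smul_of_sum_eq_one he hme, sum_eq_single_of_mem i hi,
    Lagrange.eval_basis_self hθ hi, one_smul]
  intro j hj hji
  rw [Lagrange.eval_basis_of_ne (Ne.symm hji) hj, zero_smul]

theorem eq_of_sum_eq_one_of_mul_eq_smul {m : A} {s : Finset ι} {θ : ι → K}
    (hθ : Set.InjOn θ s) {e f : ι → A}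
    (he : ∑ i ∈ s, e i = 1) (hme : ∀ i ∈ s, m * e i = θ i • e i)
    (hf : ∑ i ∈ s, f i = 1) (hmf : ∀ i ∈ s, m * f i = θ i • f i) {i : ι} (hi : i ∈ s) :
    e i = f i := by
  classical
  rw [← aeval_lagrangeBasis_eq_of_sum_eq_one hθ he hme hi,
    aeval_lagrangeBasis_eq_of_sum_eq_one hθ hf hmf hi]

end Resolution

theorem sum_range_succ_eq_sum_range_half_pair {M : Type*} [AddCommMonoid M] (D : ℕ)
    (g : ℕ → M) :
    ∑ j ∈ range (D + 1), g j = ∑ i ∈ range (D / 2 + 1), ∑ j ∈ {i, D - i}, g j := by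
  have hcover : (range (D / 2 + 1)).biUnion (fun i => {i, D - i}) = range (D + 1) := by
    ext j
    simp only [mem_biUnion, mem_range, mem_insert, mem_singleton]
    constructor
    · rintro ⟨i, hi, rfl | rfl⟩ <;> omega
    · intro hj
      by_cases h : j ≤ D / 2
      · exact ⟨j, by omega, Or.inl rfl⟩
      · exact ⟨D - j, by omega, Or.inr (by omega)⟩
  rw [← hcover, sum_biUnion]
  intro i hi i' hi' hne
  simp only [coe_range, Set.mem_Iio] at hi hi'
  simp only [Function.onFun, disjoint_insert_left, disjoint_insert_right, disjoint_singleton,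
    mem_insert, mem_singleton]
  omega

theorem injOn_halfCube_eigenvalue (D : ℕ) :
    Set.InjOn (fun i : ℕ => (((D : ℂ) - 2 * i) ^ 2 - D) / 2) (range (D / 2 + 1)) := by
  intro i hi j hj hij
  simp only [coe_range, Set.mem_Iio] at hi hj
  have hsq : ((D : ℤ) - 2 * i) ^ 2 = ((D : ℤ) - 2 * j) ^ 2 := by
    have : ((D : ℂ) - 2 * i) ^ 2 = ((D : ℂ) - 2 * j) ^ 2 := by linear_combination 2 * hij
    exact_mod_cast this
  have := (pow_left_inj₀ (by omega) (by omega) two_ne_zero).mp hsq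
  omega

theorem ZMod.eq_one_of_ne_zero_two {a : ZMod 2} (ha : a ≠ 0) : a = 1 := by
  revert a
  decide

section HammingWeight

variable {ι : Type*} [Fintype ι]

theorem natCast_hammingNorm_eq_sum (x : ι → ZMod 2) : (hammingNorm x : ZMod 2) = ∑ i, x i := by
  rw [hammingNorm, natCast_card_filter]
  refine sum_congr rfl fun i _ => ?_
  generalize x i = a
  revert a
  decide

theorem even_hammingNorm_sub_iff (x y : ι → ZMod 2) :
    Even (hammingNorm (x - y)) ↔ (Even (hammingNorm x) ↔ Even (hammingNorm y)) := by
  simp only [← ZMod.natCast_eq_zero_iff_even, natCast_hammingNorm_eq_sum, Pi.sub_apply,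
    sum_sub_distrib]
  generalize ∑ i, x i = a
  generalize ∑ i, y i = b
  revert a b
  decide

variable [DecidableEq ι]

theorem hammingNorm_eq_one_iff (u : ι → ZMod 2) :
    hammingNorm u = 1 ↔ ∃ k, u = Pi.single k 1 := by
  rw [hammingNorm, card_eq_one]
  refine exists_congr fun k => ⟨fun h => funext fun i => ?_, ?_⟩
  · have hi := Finset.ext_iff.mp h i
    simp only [mem_filter, mem_univ, true_and, mem_singleton] at hi
    by_cases hik : i = k
    · subst hik
      rw [Pi.single_eq_same]
      exact ZMod.eq_one_of_ne_zero_two (hi.mpr rfl)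
    · rw [Pi.single_eq_of_ne hik]
      exact not_not.mp (mt hi.mp hik)
  · rintro rfl
    ext i
    by_cases hik : i = k <;> simp [hik]

theorem hammingNorm_sub_single (v : ι → ZMod 2) (k : ι) :
    hammingNorm (v - Pi.single k 1) =
      if v k = 0 then hammingNorm v + 1 else hammingNorm v - 1 := by
  have hsupp : ({i | (v - Pi.single k 1 : ι → ZMod 2) i ≠ 0} : Finset ι) =
      if v k = 0 then insert k ({i | v i ≠ 0} : Finset ι)
      else ({i | v i ≠ 0} : Finset ι).erase k := by
    ext i
    by_cases hik : i = k
    · subst hik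
      by_cases h : v i = 0
      · simp [h]
      · simp [ZMod.eq_one_of_ne_zero_two h]
    · split_ifs <;> simp [hik]
  rw [hammingNorm, hammingNorm, hsupp]
  split_ifs with h
  · exact card_insert_of_notMem (by simp [h])
  · exact card_erase_of_mem (by simp [h])

theorem sum_ite_hammingNorm_eq_one {M : Type*} [AddCommMonoid M] (h : (ι → ZMod 2) → M) :
    ∑ u, (if hammingNorm u = 1 then h u else 0) = ∑ k, h (Pi.single k 1) := by
  have hinj : Function.Injective fun k : ι => (Pi.single k 1 : ι → ZMod 2) := fun k l hkl => by
    by_contra hne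
    simpa [Pi.single_eq_of_ne hne] using congrFun hkl k
  have hweight : ({u | hammingNorm u = 1} : Finset (ι → ZMod 2)) = univ.image (Pi.single · 1) := by
    ext u
    simp only [mem_filter, mem_univ, true_and, mem_image, hammingNorm_eq_one_iff]
    exact exists_congr fun k => eq_comm
  rw [← sum_filter, hweight, sum_image hinj.injOn]

theorem card_filter_hammingNorm_sub_single_eq_one (v : ι → ZMod 2) :
    #{k | hammingNorm (v - Pi.single k 1) = 1} =
      (if hammingNorm v = 2 then 2 else 0) + (if v = 0 then Fintype.card ι else 0) := by
  by_cases hv : v = 0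
  · subst hv
    have hall (k : ι) : hammingNorm ((0 : ι → ZMod 2) - Pi.single k 1) = 1 := by
      rw [hammingNorm_sub_single, Pi.zero_apply, if_pos rfl, hammingNorm_zero]
    simp only [hall, filter_true, card_univ, hammingNorm_zero]
    simp
  have hv' : hammingNorm v ≠ 0 := hammingNorm_ne_zero_iff.mpr hv
  by_cases h2 : hammingNorm v = 2
  · have : ({k | hammingNorm (v - Pi.single k 1) = 1} : Finset ι) = ({k | v k ≠ 0} : Finset ι) := by
      ext k
      by_cases hk : v k = 0 <;> simp [hammingNorm_sub_single, hk, h2]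
    rw [this, if_pos h2, if_neg hv]
    exact h2
  · rw [if_neg h2, if_neg hv, card_eq_zero, filter_eq_empty_iff]
    intro k _
    rw [hammingNorm_sub_single]
    split_ifs <;> omega

end HammingWeight

noncomputable def dist2Cube (D : ℕ) : Matrix (Vtx D) (Vtx D) ℂ :=
  fun y z => if hammingNorm (y - z) = 2 then 1 else 0

/-- At `i = D / 2` the pair `{i, D - i}` is a singleton, so this is the restriction of `𝐄_{D/2}`. -/
noncomputable def halfRestrict {D : ℕ} (E' : ℕ → Matrix (Vtx D) (Vtx D) ℂ) (i : ℕ) :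
    Matrix (HVtx D) (HVtx D) ℂ :=
  (∑ j ∈ {i, D - i}, E' j).submatrix Subtype.val Subtype.val

section Hypercube

variable {D : ℕ}

theorem adjCube_mul_self : adjCube D * adjCube D = (2 : ℂ) • dist2Cube D + (D : ℂ) • 1 := by
  ext y z
  have hcount : (adjCube D * adjCube D) y z = #{k | hammingNorm (y - z - Pi.single k 1) = 1} :=
    calc (adjCube D * adjCube D) y z
        = ∑ u, if hammingNorm u = 1 then adjCube D (y - u) z else 0 := by
          refine Fintype.sum_equiv (Equiv.subLeft y) _ _ fun x => ?_
          simp only [adjCube, Equiv.subLeft_apply, sub_sub_cancel, mul_ite, mul_one, mul_zero]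
          split_ifs <;> rfl
      _ = ∑ k, adjCube D (y - Pi.single k 1) z := sum_ite_hammingNorm_eq_one _
      _ = #{k | hammingNorm (y - z - Pi.single k 1) = 1} := by
          simp [adjCube, sub_right_comm]
  rw [hcount, card_filter_hammingNorm_sub_single_eq_one]
  by_cases h2 : hammingNorm (y - z) = 2 <;> by_cases hyz : y = z <;>
    simp [dist2Cube, h2, hyz, sub_eq_zero]

theorem dist2Cube_mul_of_adjCube_mul {N : Matrix (Vtx D) (Vtx D) ℂ} {μ : ℂ}
    (h : adjCube D * N = μ • N) : dist2Cube D * N = ((μ ^ 2 - D) / 2) • N := by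
  have h2 : (2 : ℂ) • (dist2Cube D * N) = (μ ^ 2 - D) • N := by
    have hsq := congrArg (· * N) (adjCube_mul_self (D := D))
    simp only [Matrix.add_mul, Matrix.smul_mul, Matrix.one_mul, Matrix.mul_assoc, h,
      Matrix.mul_smul, smul_smul] at hsq
    rw [sub_smul, sq, hsq, add_sub_cancel_right]
  calc dist2Cube D * N = (2 : ℂ)⁻¹ • (2 : ℂ) • (dist2Cube D * N) := by
        rw [smul_smul, inv_mul_cancel₀ two_ne_zero, one_smul]
    _ = ((μ ^ 2 - D) / 2) • N := by rw [h2, smul_smul, div_eq_inv_mul]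

theorem adjHalf_mul_submatrix (N : Matrix (Vtx D) (Vtx D) ℂ) :
    adjHalf D * N.submatrix Subtype.val Subtype.val =
      (dist2Cube D * N).submatrix Subtype.val Subtype.val := by
  ext y z
  simp only [Matrix.mul_apply, Matrix.submatrix_apply]
  rw [← Fintype.sum_subtype_add_sum_subtype (fun x => Even (hammingNorm x))]
  have hodd (x : {x : Vtx D // ¬Even (hammingNorm x)}) : dist2Cube D y.val x.val = 0 := by
    refine if_neg fun h2 => x.2 ?_
    exact ((even_hammingNorm_sub_iff _ _).mp (h2.symm ▸ even_two)).mp y.2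
  simp only [hodd, zero_mul, sum_const_zero, add_zero]
  rfl

theorem sum_halfRestrict {E' : ℕ → Matrix (Vtx D) (Vtx D) ℂ}
    (hsum' : ∑ i ∈ range (D + 1), E' i = 1) :
    ∑ i ∈ range (D / 2 + 1), halfRestrict E' i = 1 := by
  have hrestrict : ∑ i ∈ range (D / 2 + 1), halfRestrict E' i =
      (∑ i ∈ range (D / 2 + 1), ∑ j ∈ {i, D - i}, E' j).submatrix Subtype.val Subtype.val := by
    ext y z
    simp [halfRestrict, Matrix.sum_apply]
  rw [hrestrict, ← sum_range_succ_eq_sum_range_half_pair, hsum',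
    Matrix.submatrix_one _ Subtype.val_injective]

theorem adjHalf_mul_halfRestrict {E' : ℕ → Matrix (Vtx D) (Vtx D) ℂ}
    (heig' : ∀ i ≤ D, adjCube D * E' i = ((D : ℂ) - 2 * i) • E' i) {i : ℕ} (hi : i ≤ D) :
    adjHalf D * halfRestrict E' i = ((((D : ℂ) - 2 * i) ^ 2 - D) / 2) • halfRestrict E' i := by
  have hpair : ∀ j ∈ ({i, D - i} : Finset ℕ),
      dist2Cube D * E' j = ((((D : ℂ) - 2 * i) ^ 2 - D) / 2) • E' j := by
    intro j hj
    simp only [mem_insert, mem_singleton] at hj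
    rw [dist2Cube_mul_of_adjCube_mul (heig' j (by omega))]
    rcases hj with rfl | rfl
    · rfl
    · push_cast [Nat.cast_sub hi]
      ring_nf
  simp only [halfRestrict, adjHalf_mul_submatrix, Matrix.mul_sum, sum_congr rfl hpair, ← smul_sum]
  rfl

end Hypercube

theorem stmt12 (D : ℕ) (hD : 3 ≤ D) (hDeven : Even D)
    (E' : ℕ → Matrix (Vtx D) (Vtx D) ℂ)
    (hsum' : ∑ i ∈ Finset.range (D + 1), E' i = 1)
    (heig' : ∀ i ≤ D, adjCube D * E' i = ((D : ℂ) - 2 * i) • E' i)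
    (E : ℕ → Matrix (HVtx D) (HVtx D) ℂ)
    (hsum : ∑ i ∈ Finset.range (D / 2 + 1), E i = 1)
    (heig : ∀ i ≤ D / 2,
      adjHalf D * E i = (((((D : ℂ) - 2 * i)) ^ 2 - D) / 2) • E i) :
    (∀ i ≤ D / 2 - 1, ∀ y z : HVtx D,
      E i y z = (E' i + E' (D - i)) y.val z.val) ∧
    (∀ y z : HVtx D, E (D / 2) y z = E' (D / 2) y.val z.val) := by
  have hEF (i : ℕ) (hi : i ≤ D / 2) : E i = halfRestrict E' i :=
    eq_of_sum_eq_one_of_mul_eq_smul (injOn_halfCube_eigenvalue D) hsum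
      (fun j hj => heig j (by simp only [mem_range] at hj; omega)) (sum_halfRestrict hsum')
      (fun j hj => adjHalf_mul_halfRestrict heig' (by simp only [mem_range] at hj; omega))
      (mem_range.mpr (by omega))
  refine ⟨fun i hi y z => ?_, fun y z => ?_⟩
  · rw [hEF i (by omega)]
    simp [halfRestrict, sum_pair (show i ≠ D - i by omega)]
  · have hhalf : D - D / 2 = D / 2 := by obtain ⟨k, rfl⟩ := hDeven; omega
    rw [hEF (D / 2) le_rfl]
    simp [halfRestrict, hhalf]
end

section
/- Let E_0, …, E_{⌊D/2⌋} ∈ Mat_X(ℂ) satisfy Σ_i E_i = I and A·E_i = θ_i·E_i for all 0 ≤ i ≤ ⌊D/2⌋, where θ_i = ((D−2i)² − D)/2 (so they are the primitive idempotents of the halved cube). Then for every x₀ ∈ X and every y ∈ X one has 2^{D−1}·(E_1)_{x₀ y} = D − 2·w(x₀−y). In other words, the dual adjacency matrix A*(x₀) of the halved cube, defined as the diagonal matrix with entries |X|·(E_1)_{x₀ y}, has diagonal entries D − 2·w(x₀−y). -/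
/-!
The characters `χ_u(v) = (-1)^(u ⬝ᵥ v)` of `𝔽₂^D` give matrices `P_u(x, y) = χ_u(x + y)` on the
even-weight words with `A P_u = P_u A = θ P_u`, where `θ = ∑_{w(d) = 2} χ_u(d)` equals
`((D - 2 w(u))² - D) / 2` because `(∑ₖ χ_u(eₖ))² = D + 2 ∑_{w(d) = 2} χ_u(d)`. This is `θ_j` for
`j = min(w(u), D - w(u))`, and grouping the `P_u` by `j` gives matrices `F_j` with `∑ F_j = I`
and `F_j A = θ_j F_j`. The `θ_j` with `j ≤ D/2` are distinct, so `F_i E_j = 0` for `i ≠ j` and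
`E_1 = (∑ F_i) E_1 = F_1 E_1 = F_1 (∑ E_j) = F_1`. Finally `χ_{u+𝟙} = χ_u` on even words, so
`F_1(x, y)` collects the weight-one sum `D - 2 w(x + y)` twice.
-/

open Matrix

open Finset

theorem eq_of_sum_eq_one_of_mul_eq_smul_s13 {K R ι : Type*} [Field K] [Ring R] [Algebra K R]
    {a : R} {θ : ι → K} {s : Finset ι} (hθ : Set.InjOn θ s) {E F : ι → R}
    (hE : ∑ i ∈ s, E i = 1) (hF : ∑ i ∈ s, F i = 1)
    (hEa : ∀ i ∈ s, a * E i = θ i • E i) (hFa : ∀ i ∈ s, F i * a = θ i • F i)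
    {i : ι} (hi : i ∈ s) : E i = F i := by
  have orth : ∀ j ∈ s, ∀ k ∈ s, j ≠ k → F j * E k = 0 := by
    intro j hj k hk hjk
    have h : (θ j - θ k) • (F j * E k) = 0 := by
      rw [sub_smul, ← smul_mul_assoc, ← hFa j hj, ← mul_smul_comm, ← hEa k hk, mul_assoc,
        sub_self]
    exact (smul_eq_zero.1 h).resolve_left (sub_ne_zero.2 fun h => hjk (hθ hj hk h))
  calc E i = (∑ j ∈ s, F j) * E i := by rw [hF, one_mul]
    _ = F i * E i := by
      rw [sum_mul]
      exact sum_eq_single_of_mem i hi fun j hj hji => orth j hj i hi hji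
    _ = F i * ∑ k ∈ s, E k := by
      rw [mul_sum]
      exact (sum_eq_single_of_mem i hi fun k hk hki => orth i hi k hk hki.symm).symm
    _ = F i := by rw [hE, mul_one]

theorem AddChar.map_sum_eq_prod {A M ι : Type*} [AddCommMonoid A] [CommMonoid M]
    (ψ : AddChar A M) (s : Finset ι) (f : ι → A) : ψ (∑ i ∈ s, f i) = ∏ i ∈ s, ψ (f i) := by
  classical
  induction s using Finset.induction_on with
  | empty => simp
  | insert j s hj ih => rw [sum_insert hj, prod_insert hj, AddChar.map_add_eq_mul, ih]

theorem Finset.sq_sum_eq_sum_sq_add_two_mul_sum_powersetCard_two {ι R : Type*}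
    [DecidableEq ι] [CommSemiring R] (s : Finset ι) (f : ι → R) :
    (∑ i ∈ s, f i) ^ 2 = ∑ i ∈ s, f i ^ 2 + 2 * ∑ T ∈ s.powersetCard 2, ∏ i ∈ T, f i := by
  induction s using Finset.induction_on with
  | empty => rw [powersetCard_eq_empty.2 (by simp)]; simp
  | insert j s hj ih =>
    have hnew : ∑ T ∈ (s.powersetCard 1).image (insert j), ∏ i ∈ T, f i
        = f j * ∑ i ∈ s, f i := by
      rw [sum_image, powersetCard_one, sum_map, mul_sum]
      · refine sum_congr rfl fun i hi => ?_
        simp [prod_insert (show j ∉ ({i} : Finset ι) by aesop)]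
      · intro T hT U hU hTU
        have hjT : j ∉ T := fun h => hj ((mem_powersetCard.1 hT).1 h)
        have hjU : j ∉ U := fun h => hj ((mem_powersetCard.1 hU).1 h)
        rw [← erase_insert hjT, ← erase_insert hjU, hTU]
    have hdisj : Disjoint (s.powersetCard 2) ((s.powersetCard 1).image (insert j)) := by
      refine disjoint_left.2 fun T hT hT' => ?_
      obtain ⟨U, -, rfl⟩ := mem_image.1 hT'
      exact hj ((mem_powersetCard.1 hT).1 (mem_insert_self j U))
    rw [powersetCard_succ_insert hj, sum_union hdisj, hnew, sum_insert hj, sum_insert hj, add_sq,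
      ih]
    ring

namespace HalvedCube

theorem zmod_two_eq_zero_or_eq_one (a : ZMod 2) : a = 0 ∨ a = 1 := by
  revert a
  decide

noncomputable def sgn : AddChar (ZMod 2) ℂ :=
  AddChar.zmodChar 2 (by norm_num : (-1 : ℂ) ^ 2 = 1)

theorem sgn_eq_ite (a : ZMod 2) : sgn a = if a = 0 then 1 else -1 := by
  obtain rfl | rfl := zmod_two_eq_zero_or_eq_one a
  · simp
  · simp [sgn, AddChar.zmodChar_apply, ZMod.val_one]

theorem sgn_sq (a : ZMod 2) : sgn a ^ 2 = 1 := by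
  rw [sgn_eq_ite]
  split_ifs <;> norm_num

variable {D : ℕ}

theorem hammingNorm_le (u : Vtx D) : hammingNorm u ≤ D := by
  simpa using hammingNorm_le_card_fintype (x := u)

theorem hammingNorm_add_one (u : Vtx D) : hammingNorm (u + 1) = D - hammingNorm u := by
  have hsplit := card_filter_add_card_filter_not (s := univ) (fun k => u k = 0)
  have hflip : ∀ k, (u + 1) k ≠ 0 ↔ u k = 0 := fun k => by
    obtain h | h := zmod_two_eq_zero_or_eq_one (u k) <;> simp [h, ZModModule.add_self]
  rw [card_univ, Fintype.card_fin] at hsplit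
  simp only [hammingNorm, hflip, ne_eq]
  omega

theorem natCast_hammingNorm (v : Vtx D) : (hammingNorm v : ZMod 2) = 1 ⬝ᵥ v := by
  rw [hammingNorm, card_filter, Nat.cast_sum, one_dotProduct]
  refine sum_congr rfl fun k _ => ?_
  obtain h | h := zmod_two_eq_zero_or_eq_one (v k) <;> simp [h]

theorem even_hammingNorm_add {a b : Vtx D} (ha : Even (hammingNorm a))
    (hb : Even (hammingNorm b)) : Even (hammingNorm (a + b)) := by
  rw [← ZMod.natCast_eq_zero_iff_even] at ha hb ⊢
  rw [natCast_hammingNorm, dotProduct_add, ← natCast_hammingNorm, ← natCast_hammingNorm, ha, hb,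
    add_zero]

noncomputable def chi (u : Vtx D) : AddChar (Vtx D) ℂ where
  toFun v := sgn (u ⬝ᵥ v)
  map_zero_eq_one' := by simp
  map_add_eq_mul' a b := by rw [dotProduct_add, AddChar.map_add_eq_mul]

theorem chi_apply (u v : Vtx D) : chi u v = sgn (u ⬝ᵥ v) := rfl

theorem chi_comm (u v : Vtx D) : chi u v = chi v u := by
  rw [chi_apply, chi_apply, dotProduct_comm]

theorem chi_add_left (u u' v : Vtx D) : chi (u + u') v = chi u v * chi u' v := by
  rw [chi_comm, AddChar.map_add_eq_mul, chi_comm, chi_comm v]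

theorem chi_one_of_even {v : Vtx D} (hv : Even (hammingNorm v)) : chi 1 v = 1 := by
  rw [chi_apply, ← natCast_hammingNorm, (ZMod.natCast_eq_zero_iff_even).2 hv,
    AddChar.map_zero_eq_one]

theorem sum_chi (v : Vtx D) : ∑ u, chi u v = if v = 0 then (2 : ℂ) ^ D else 0 := by
  simp_rw [chi_comm _ v]
  split_ifs with hv
  · simp [hv, chi_apply]
  · rw [AddChar.sum_eq_zero_iff_ne_zero, AddChar.ne_zero_iff]
    obtain ⟨k, hk⟩ := Function.ne_iff.1 hv
    refine ⟨Pi.single k 1, ?_⟩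
    rw [chi_apply, dotProduct_single, mul_one, sgn_eq_ite, if_neg (by simpa using hk)]
    norm_num

def finsetEquiv : Vtx D ≃ Finset (Fin D) where
  toFun v := {k | v k ≠ 0}
  invFun S k := if k ∈ S then 1 else 0
  left_inv v := funext fun k => by
    obtain h | h := zmod_two_eq_zero_or_eq_one (v k) <;> simp [h]
  right_inv S := by ext k; simp

theorem chi_finsetEquiv_symm (u : Vtx D) (S : Finset (Fin D)) :
    chi u (finsetEquiv.symm S) = ∏ k ∈ S, sgn (u k) := by
  rw [chi_apply, ← AddChar.map_sum_eq_prod]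
  congr 1
  simp [finsetEquiv, dotProduct]

theorem sum_chi_hammingNorm_eq (u : Vtx D) (j : ℕ) :
    ∑ d with hammingNorm d = j, chi u d = ∑ S ∈ powersetCard j univ, ∏ k ∈ S, sgn (u k) :=
  sum_equiv finsetEquiv (by simp [mem_powersetCard, hammingNorm, finsetEquiv])
    fun d _ => by rw [← chi_finsetEquiv_symm, Equiv.symm_apply_apply]

theorem sum_sgn (v : Vtx D) : ∑ k, sgn (v k) = (D : ℂ) - 2 * hammingNorm v := by
  have h : ∀ k, sgn (v k) = 1 - 2 * if v k ≠ 0 then 1 else 0 := fun k => by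
    obtain h | h := zmod_two_eq_zero_or_eq_one (v k) <;> norm_num [h, sgn_eq_ite]
  simp only [h, sum_sub_distrib, ← mul_sum, sum_boole]
  simp [hammingNorm]

theorem sum_chi_hammingNorm_one (v : Vtx D) :
    ∑ u with hammingNorm u = 1, chi u v = (D : ℂ) - 2 * hammingNorm v := by
  simp_rw [chi_comm _ v]
  rw [sum_chi_hammingNorm_eq, powersetCard_one, sum_map, ← sum_sgn]
  simp

theorem sum_chi_hammingNorm_sub_one (hD : D ≠ 0) {v : Vtx D} (hv : Even (hammingNorm v)) :
    ∑ u with hammingNorm u = D - 1, chi u v = (D : ℂ) - 2 * hammingNorm v := by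
  rw [← sum_chi_hammingNorm_one]
  refine sum_equiv (Equiv.addRight 1) (fun u => ?_) fun u _ => ?_
  · have := hammingNorm_le u
    simp only [mem_filter, mem_univ, true_and, Equiv.coe_addRight, hammingNorm_add_one]
    omega
  · rw [Equiv.coe_addRight, chi_add_left, chi_one_of_even hv, mul_one]

noncomputable def eigenvalue (D j : ℕ) : ℂ := (((D : ℂ) - 2 * j) ^ 2 - D) / 2

theorem sum_chi_hammingNorm_two (u : Vtx D) :
    ∑ d with hammingNorm d = 2, chi u d = eigenvalue D (hammingNorm u) := by
  rw [sum_chi_hammingNorm_eq, eigenvalue, ← sum_sgn,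
    sq_sum_eq_sum_sq_add_two_mul_sum_powersetCard_two]
  simp [sgn_sq]

theorem eigenvalue_injOn : Set.InjOn (eigenvalue D) (range (D / 2 + 1)) := by
  intro i hi j hj h
  simp only [coe_range, Set.mem_Iio] at hi hj
  rw [eigenvalue, eigenvalue] at h
  have hfactor : ((i : ℂ) - j) * (i + j - D) = 0 := by linear_combination h / 2
  rcases mul_eq_zero.1 hfactor with h | h
  · exact_mod_cast sub_eq_zero.1 h
  · have : i + j = D := by exact_mod_cast sub_eq_zero.1 h
    omega

def foldedWeight (u : Vtx D) : ℕ := min (hammingNorm u) (D - hammingNorm u)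

theorem foldedWeight_le_half (u : Vtx D) : foldedWeight u ≤ D / 2 := by
  have := hammingNorm_le u
  rw [foldedWeight]
  omega

theorem eigenvalue_foldedWeight (u : Vtx D) :
    eigenvalue D (foldedWeight u) = eigenvalue D (hammingNorm u) := by
  rcases min_choice (hammingNorm u) (D - hammingNorm u) with h | h <;> rw [foldedWeight, h]
  rw [eigenvalue, eigenvalue, Nat.cast_sub (hammingNorm_le u)]
  ring

theorem foldedWeight_eq_one_iff (hD : 3 ≤ D) (u : Vtx D) :
    foldedWeight u = 1 ↔ hammingNorm u = 1 ∨ hammingNorm u = D - 1 := by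
  have := hammingNorm_le u
  rw [foldedWeight]
  omega

noncomputable def charMatrix (u : Vtx D) : Matrix (HVtx D) (HVtx D) ℂ :=
  fun x y => chi u (x.val + y.val)

theorem adjHalf_apply (x y : HVtx D) :
    adjHalf D x y = if hammingNorm (x.val + y.val) = 2 then 1 else 0 := by
  rw [adjHalf, ZModModule.sub_eq_add]

theorem adjHalf_mul_charMatrix (u : Vtx D) :
    adjHalf D * charMatrix u = eigenvalue D (hammingNorm u) • charMatrix u := by
  ext x y
  rw [mul_apply, Matrix.smul_apply, smul_eq_mul, ← sum_chi_hammingNorm_two, sum_mul]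
  simp only [adjHalf_apply, ite_mul, one_mul, zero_mul, charMatrix]
  rw [← sum_filter]
  have hcancel : ∀ d : Vtx D, x.val + (x.val + d) = d := fun d => by
    rw [← add_assoc, ZModModule.add_self, zero_add]
  refine sum_bij' (fun z _ => x.val + z.val)
    (fun d hd => ⟨x.val + d,
      even_hammingNorm_add x.2 (by rw [(mem_filter.1 hd).2]; exact even_two)⟩)
    (fun z hz => by simpa using hz) (fun d hd => by simpa [hcancel] using hd)
    (fun z _ => Subtype.ext (hcancel z.val)) (fun d _ => hcancel d) fun z _ => ?_
  rw [← AddChar.map_add_eq_mul, add_comm x.val, ZModModule.add_add_add_cancel]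

theorem adjHalf_transpose : (adjHalf D)ᵀ = adjHalf D := by
  ext x y
  rw [transpose_apply, adjHalf_apply, adjHalf_apply, add_comm]

theorem charMatrix_transpose (u : Vtx D) : (charMatrix u)ᵀ = charMatrix u := by
  ext x y
  rw [transpose_apply, charMatrix, charMatrix, add_comm]

theorem charMatrix_mul_adjHalf (u : Vtx D) :
    charMatrix u * adjHalf D = eigenvalue D (hammingNorm u) • charMatrix u := by
  simpa [transpose_mul, adjHalf_transpose, charMatrix_transpose] using
    congrArg transpose (adjHalf_mul_charMatrix u)

theorem sum_charMatrix :
    ∑ u, charMatrix u = (2 : ℂ) ^ D • (1 : Matrix (HVtx D) (HVtx D) ℂ) := by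
  ext x y
  simp only [Matrix.sum_apply, charMatrix, sum_chi, Matrix.smul_apply, one_apply, smul_eq_mul,
    mul_ite, mul_one, mul_zero, ← Subtype.ext_iff, ← ZModModule.sub_eq_add, sub_eq_zero]

/-- Each word `u` is counted together with `u + 𝟙`, which gives the same matrix: hence the
normalisation `2⁻ᴰ` rather than `|X|⁻¹`. -/
noncomputable def idempotent (D i : ℕ) : Matrix (HVtx D) (HVtx D) ℂ :=
  ((2 : ℂ) ^ D)⁻¹ • ∑ u with foldedWeight u = i, charMatrix u

theorem idempotent_mul_adjHalf (i : ℕ) :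
    idempotent D i * adjHalf D = eigenvalue D i • idempotent D i := by
  rw [idempotent, Matrix.smul_mul, smul_comm]
  congr 1
  rw [Finset.sum_mul, smul_sum]
  refine sum_congr rfl fun u hu => ?_
  rw [charMatrix_mul_adjHalf, ← (mem_filter.1 hu).2, eigenvalue_foldedWeight]

theorem sum_idempotent : ∑ i ∈ range (D / 2 + 1), idempotent D i = 1 := by
  simp only [idempotent, ← smul_sum]
  rw [sum_fiberwise_of_maps_to fun u _ => mem_range_succ_iff.2 (foldedWeight_le_half u),
    sum_charMatrix, smul_smul, inv_mul_cancel₀ (by norm_num), one_smul]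

theorem sum_chi_foldedWeight_one (hD : 3 ≤ D) {v : Vtx D} (hv : Even (hammingNorm v)) :
    ∑ u with foldedWeight u = 1, chi u v = 2 * ((D : ℂ) - 2 * hammingNorm v) := by
  have hdisj : Disjoint (univ.filter fun u : Vtx D => hammingNorm u = 1)
      (univ.filter fun u => hammingNorm u = D - 1) :=
    disjoint_filter.2 fun u _ h1 h2 => by omega
  rw [filter_congr fun u _ => foldedWeight_eq_one_iff hD u, filter_or, sum_union hdisj,
    sum_chi_hammingNorm_one, sum_chi_hammingNorm_sub_one (by omega) hv]
  ring

theorem idempotent_one_apply (hD : 3 ≤ D) (x y : HVtx D) :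
    (2 : ℂ) ^ (D - 1) * idempotent D 1 x y = D - 2 * hammingNorm (x.val - y.val) := by
  simp only [idempotent, Matrix.smul_apply, Matrix.sum_apply, charMatrix, smul_eq_mul]
  rw [sum_chi_foldedWeight_one hD (even_hammingNorm_add x.2 y.2), ZModModule.sub_eq_add x.val,
    ← pow_sub_one_mul (by omega : D ≠ 0)]
  field_simp

end HalvedCube

theorem stmt13 (D : ℕ) (hD : 3 ≤ D)
    (E : ℕ → Matrix (HVtx D) (HVtx D) ℂ)
    (hsum : ∑ i ∈ Finset.range (D / 2 + 1), E i = 1)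
    (heig : ∀ i ≤ D / 2,
      adjHalf D * E i = (((((D : ℂ) - 2 * i)) ^ 2 - D) / 2) • E i) :
    ∀ x₀ y : HVtx D,
      (2 ^ (D - 1) : ℂ) * E 1 x₀ y = (D : ℂ) - 2 * hammingNorm (x₀.val - y.val) := by
  intro x₀ y
  have hE : E 1 = HalvedCube.idempotent D 1 :=
    eq_of_sum_eq_one_of_mul_eq_smul_s13 HalvedCube.eigenvalue_injOn hsum HalvedCube.sum_idempotent
      (fun i hi => heig i (Nat.lt_succ_iff.1 (mem_range.1 hi)))
      (fun i _ => HalvedCube.idempotent_mul_adjHalf i) (mem_range.2 (by omega))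
  rw [hE, HalvedCube.idempotent_one_apply hD]
end
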